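/- Suppose Theorem (tripartite Corrádi–Hajnal) holds for all N divisible by 3 with N ≥ N0: i.e., every balanced tripartite graph on 3N vertices with each vertex adjacent to at least (2/3)N vertices in each other class has a perfect triangle tiling or equals Γ_3(N/3) with N/3 odd. Then for N = 3t + 1 with 3t ≥ N0: every balanced tripartite graph G on 3N vertices in which every vertex has at least ⌈(2/3)N⌉ = 2t+1 neighbors in each other class contains a perfect triangle tiling. -/

import Mathlib

/-!
Remove a triangle `{(i, c i)}`; one exists because two neighbourhoods of size `≥ 2t + 1` in a
class of size `3t + 1` meet. The remainder has `3t` vertices per class and class degrees `≥ 2t`,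
so by hypothesis it tiles, and the triangle completes a tiling of `G`, unless it is `Γ₃(t)`.
That graph is `4t`-regular, which leaves no room for a remaining vertex to miss a removed vertex
outside its class: it has `≥ 2t + 1` neighbours in each other class of `G`. So the removed
vertices are adjacent to everything outside their class. Now remove instead a triangle of the
remainder: the vertex `(1, c 1)` survives with degree `6t ≠ 4t`, so the new remainder is not
`Γ₃(t)` and tiles.
-/

/-- The graph `Γ_k` (0-indexed). -/
def gammaGraph (k : ℕ) : SimpleGraph (Fin k × Fin k) where
  Adj p q := p.1 ≠ q.1 ∧
    ((p.2 ≠ q.2 ∧ (p.2.val < k - 2 ∨ q.2.val < k - 2)) ∨ (p.2 = q.2 ∧ k - 2 ≤ p.2.val))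
  symm := by
    constructor
    rintro p q ⟨h1, h2⟩
    refine ⟨h1.symm, ?_⟩
    rcases h2 with ⟨hne, hor⟩ | ⟨heq, hge⟩
    · exact Or.inl ⟨hne.symm, hor.symm⟩
    · exact Or.inr ⟨heq.symm, heq ▸ hge⟩
  loopless := ⟨fun _ h => h.1 rfl⟩

/-- The blow-up `G(t)`. -/
def blowup {V : Type*} (G : SimpleGraph V) (t : ℕ) : SimpleGraph (V × Fin t) :=
  SimpleGraph.comap Prod.fst G

/-- A perfect triangle tiling: vertex-disjoint triangles covering all vertices. -/
def TriTiling {V : Type*} [DecidableEq V] (G : SimpleGraph V) : Prop :=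
  ∃ T : Finset (Finset V), (∀ s ∈ T, G.IsNClique 3 s) ∧
    (T : Set (Finset V)).PairwiseDisjoint id ∧ ∀ v : V, ∃ s ∈ T, v ∈ s

open Finset SimpleGraph

instance (k : ℕ) : DecidableRel (gammaGraph k).Adj := fun _ _ =>
  inferInstanceAs (Decidable (_ ∧ _))

instance {V : Type*} (G : SimpleGraph V) [DecidableRel G.Adj] (t : ℕ) :
    DecidableRel (blowup G t).Adj :=
  inferInstanceAs (DecidableRel (G.comap Prod.fst).Adj)

theorem SimpleGraph.IsRegularOfDegree.of_iso {V W : Type*} [Fintype V] [Fintype W]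
    {G : SimpleGraph V} {G' : SimpleGraph W} [DecidableRel G.Adj] [DecidableRel G'.Adj]
    {d : ℕ} (h : G'.IsRegularOfDegree d) (f : G ≃g G') : G.IsRegularOfDegree d :=
  fun v => (f.degree_eq v).symm.trans (h (f v))

theorem SimpleGraph.IsRegularOfDegree.blowup {V : Type*} [Fintype V]
    {G : SimpleGraph V} [DecidableRel G.Adj] {d : ℕ} (h : G.IsRegularOfDegree d) (t : ℕ) :
    (_root_.blowup G t).IsRegularOfDegree (d * t) := by
  intro v
  have : (_root_.blowup G t).neighborFinset v = G.neighborFinset v.1 ×ˢ univ := by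
    ext w
    simp only [mem_neighborFinset, mem_product, mem_univ, and_true]
    rfl
  rw [← card_neighborFinset_eq_degree, this, card_product, card_neighborFinset_eq_degree,
    h.degree_eq, card_univ, Fintype.card_fin]

theorem isRegularOfDegree_gammaGraph_three : (gammaGraph 3).IsRegularOfDegree 4 := by
  unfold IsRegularOfDegree
  decide

section Skip

variable {ι : Type*} {n : ℕ}

/-- `G.comap (skip c)` is `G` with the transversal `{(i, c i)}` deleted. -/
def skip (c : ι → Fin (n + 1)) : ι × Fin n ↪ ι × Fin (n + 1) where
  toFun p := (p.1, (c p.1).succAbove p.2)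
  inj' := by
    rintro ⟨i, x⟩ ⟨j, y⟩ h
    simp only [Prod.mk.injEq] at h
    obtain ⟨rfl, h⟩ := h
    rw [Fin.succAbove_right_injective h]

variable (c : ι → Fin (n + 1))

theorem skip_ne (p : ι × Fin n) (j : ι) : skip c p ≠ (j, c j) := by
  intro h
  obtain ⟨rfl, h⟩ := Prod.mk.inj h
  exact Fin.succAbove_ne _ _ h

theorem exists_skip_eq {w : ι × Fin (n + 1)} (h : w.2 ≠ c w.1) : ∃ p, skip c p = w := by
  obtain ⟨x, hx⟩ := Fin.exists_succAbove_eq h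
  exact ⟨(w.1, x), Prod.ext rfl hx⟩

end Skip

section Multipartite

variable {ι : Type*} [Fintype ι] [DecidableEq ι] {m n : ℕ}

def classNeighbors (G : SimpleGraph (ι × Fin m)) [DecidableRel G.Adj] (v : ι × Fin m) (i : ι) :
    Finset (ι × Fin m) :=
  univ.filter fun w => w.1 = i ∧ G.Adj v w

theorem classNeighbors_subset (G : SimpleGraph (ι × Fin m)) [DecidableRel G.Adj]
    (v : ι × Fin m) (i : ι) :
    classNeighbors G v i ⊆ univ.filter fun w => w.1 = i :=
  fun _ hw => mem_filter.2 ⟨mem_univ _, (mem_filter.1 hw).2.1⟩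

theorem card_filter_fst_eq (i : ι) : #(univ.filter fun w : ι × Fin m => w.1 = i) = m := by
  have : (univ.filter fun w : ι × Fin m => w.1 = i) = {i} ×ˢ univ := by
    ext ⟨a, b⟩
    simp [eq_comm]
  rw [this, card_product, card_singleton, card_univ, Fintype.card_fin, one_mul]

theorem degree_eq_sum_card_classNeighbors (G : SimpleGraph (ι × Fin m)) [DecidableRel G.Adj]
    (v : ι × Fin m) : G.degree v = ∑ i, #(classNeighbors G v i) := by
  rw [← card_neighborFinset_eq_degree, neighborFinset_eq_filter,
    card_eq_sum_card_fiberwise (f := Prod.fst) (t := univ) fun _ _ => mem_univ _]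
  simp only [classNeighbors, filter_filter, and_comm]

theorem le_degree_of_forall_adj (G : SimpleGraph (ι × Fin m)) [DecidableRel G.Adj]
    {v : ι × Fin m} (hv : ∀ w : ι × Fin m, w.1 ≠ v.1 → G.Adj v w) :
    (Fintype.card ι - 1) * m ≤ G.degree v := by
  have hcard : #(univ.filter fun w : ι × Fin m => w.1 = v.1)ᶜ = (Fintype.card ι - 1) * m := by
    rw [card_compl, card_filter_fst_eq, Fintype.card_prod, Fintype.card_fin, Nat.sub_mul, one_mul]
  rw [← hcard, ← card_neighborFinset_eq_degree]
  exact card_le_card fun w hw =>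
    (mem_neighborFinset _ _ _).2 (hv w fun h => mem_compl.1 hw (mem_filter.2 ⟨mem_univ _, h⟩))

variable (c : ι → Fin (n + 1)) (G : SimpleGraph (ι × Fin (n + 1))) [DecidableRel G.Adj]

theorem map_classNeighbors_comap_skip (p : ι × Fin n) (j : ι) :
    (classNeighbors (G.comap (skip c)) p j).map (skip c) =
      (classNeighbors G (skip c p) j).erase (j, c j) := by
  ext w
  simp only [classNeighbors, mem_map, mem_erase, mem_filter, mem_univ, true_and, comap_adj]
  constructor
  · rintro ⟨p', ⟨rfl, hadj⟩, rfl⟩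
    exact ⟨skip_ne c p' p'.1, rfl, hadj⟩
  · rintro ⟨hne, rfl, hadj⟩
    obtain ⟨p', rfl⟩ := exists_skip_eq c fun h => hne (Prod.ext rfl h)
    exact ⟨p', ⟨rfl, hadj⟩, rfl⟩

theorem card_classNeighbors_comap_skip (p : ι × Fin n) (j : ι) :
    #(classNeighbors (G.comap (skip c)) p j) =
      #((classNeighbors G (skip c p) j).erase (j, c j)) := by
  rw [← map_classNeighbors_comap_skip, card_map]

theorem card_classNeighbors_le_comap_skip (p : ι × Fin n) (j : ι) :
    #(classNeighbors G (skip c p) j) - 1 ≤ #(classNeighbors (G.comap (skip c)) p j) :=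
  card_classNeighbors_comap_skip c G p j ▸ pred_card_le_card_erase

theorem le_card_classNeighbors_comap_skip {d : ℕ}
    (hdeg : ∀ v i, i ≠ v.1 → d + 1 ≤ #(classNeighbors G v i)) (p : ι × Fin n) (i : ι)
    (hi : i ≠ p.1) : d ≤ #(classNeighbors (G.comap (skip c)) p i) := by
  have := card_classNeighbors_le_comap_skip c G p i
  have := hdeg (skip c p) i hi
  omega

theorem card_classNeighbors_comap_skip_of_not_adj {p : ι × Fin n} {j : ι}
    (h : ¬G.Adj (skip c p) (j, c j)) :
    #(classNeighbors (G.comap (skip c)) p j) = #(classNeighbors G (skip c p) j) := by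
  rw [card_classNeighbors_comap_skip, erase_eq_of_notMem fun hm => h (mem_filter.1 hm).2.2]

theorem exists_le_degree_comap_skip {j : ι} {x : Fin (n + 1)} (hx : x ≠ c j)
    (hadj : ∀ w : ι × Fin (n + 1), w.1 ≠ j → G.Adj (j, x) w) :
    ∃ p, (Fintype.card ι - 1) * n ≤ (G.comap (skip c)).degree p := by
  obtain ⟨p, hp⟩ := exists_skip_eq c (w := (j, x)) hx
  have hp₁ : p.1 = j := congrArg Prod.fst hp
  refine ⟨p, le_degree_of_forall_adj _ fun w hw => ?_⟩
  rw [comap_adj, hp]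
  exact hadj _ (hp₁ ▸ hw)

end Multipartite

theorem exists_triangle_transversal {m : ℕ} (G : SimpleGraph (Fin 3 × Fin m))
    [DecidableRel G.Adj] (hm : 0 < m)
    (hdeg : ∀ v i, i ≠ v.1 → m < 2 * #(classNeighbors G v i)) :
    ∃ c : Fin 3 → Fin m, ∀ i j, i ≠ j → G.Adj (i, c i) (j, c j) := by
  set x₀ : Fin m := ⟨0, hm⟩
  obtain ⟨⟨i₁, x₁⟩, hx₁⟩ : (classNeighbors G (0, x₀) 1).Nonempty := by
    have := hdeg (0, x₀) 1 (by simp)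
    exact card_pos.1 (by omega)
  obtain ⟨rfl, h₀₁⟩ := (mem_filter.1 hx₁).2
  obtain ⟨⟨i₂, x₂⟩, hx₂⟩ :
      (classNeighbors G (0, x₀) 2 ∩ classNeighbors G (1, x₁) 2).Nonempty := by
    refine inter_nonempty_of_card_lt_card_add_card (classNeighbors_subset G _ 2)
      (classNeighbors_subset G _ 2) ?_
    have := hdeg (0, x₀) 2 (by simp)
    have := hdeg (1, x₁) 2 (by simp)
    rw [card_filter_fst_eq]
    omega
  simp only [classNeighbors, mem_inter, mem_filter, mem_univ, true_and] at hx₂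
  obtain ⟨⟨rfl, h₀₂⟩, -, h₁₂⟩ := hx₂
  refine ⟨![x₀, x₁, x₂], ?_⟩
  intro i j hij
  fin_cases i <;> fin_cases j
  all_goals first
    | exact absurd rfl hij
    | assumption
    | exact (‹G.Adj _ _› : G.Adj _ _).symm

theorem TriTiling.of_comap_skip {n : ℕ} {c : Fin 3 → Fin (n + 1)}
    {G : SimpleGraph (Fin 3 × Fin (n + 1))} (hc : ∀ i j, i ≠ j → G.Adj (i, c i) (j, c j))
    (hT : TriTiling (G.comap (skip c))) : TriTiling G := by
  obtain ⟨T, hclique, hdisj, hcover⟩ := hT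
  set Δ : Finset (Fin 3 × Fin (n + 1)) := univ.image fun i => (i, c i)
  have hΔ : G.IsNClique 3 Δ := by
    refine ⟨?_, ?_⟩
    · rw [coe_image]
      rintro _ ⟨i, -, rfl⟩ _ ⟨j, -, rfl⟩ hne
      exact hc i j fun h => hne (h ▸ rfl)
    · rw [card_image_of_injective _ fun i j h => congrArg Prod.fst h, card_univ,
        Fintype.card_fin]
  have hΔdisj : ∀ s : Finset (Fin 3 × Fin n), Disjoint Δ (s.map (skip c)) := by
    intro s
    simp only [Δ, Finset.disjoint_left, mem_image, mem_map]
    rintro _ ⟨i, -, rfl⟩ ⟨p, -, hp⟩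
    exact skip_ne c p i hp
  refine ⟨insert Δ (T.image fun s => s.map (skip c)), ?_, ?_, ?_⟩
  · simp only [mem_insert, mem_image]
    rintro _ (rfl | ⟨s, hs, rfl⟩)
    · exact hΔ
    · exact (hclique s hs).map.mono (map_comap_le _ _)
  · rw [coe_insert, coe_image]
    refine .insert (((Finset.map_injective (skip c)).injOn.pairwiseDisjoint_image (f := id)).2
      fun s hs t ht hst => (disjoint_map _).2 (hdisj hs ht hst)) ?_
    rintro _ ⟨s, -, rfl⟩ -
    exact hΔdisj s
  · intro v
    by_cases hv : v.2 = c v.1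
    · exact ⟨Δ, mem_insert_self _ _, mem_image.2 ⟨v.1, mem_univ _, Prod.ext rfl hv.symm⟩⟩
    · obtain ⟨p, rfl⟩ := exists_skip_eq c hv
      obtain ⟨s, hs, hps⟩ := hcover p
      exact ⟨s.map (skip c), mem_insert_of_mem (mem_image_of_mem _ hs), mem_map_of_mem _ hps⟩

section Regular

variable {n t : ℕ} {c : Fin 3 → Fin (n + 1)} {G : SimpleGraph (Fin 3 × Fin (n + 1))}
  [DecidableRel G.Adj]

theorem adj_skip_of_isRegularOfDegree
    (hdeg : ∀ v i, i ≠ v.1 → 2 * t + 1 ≤ #(classNeighbors G v i))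
    (hreg : (G.comap (skip c)).IsRegularOfDegree (4 * t)) (p : Fin 3 × Fin n) {j : Fin 3}
    (hj : j ≠ p.1) : G.Adj (skip c p) (j, c j) := by
  by_contra hnadj
  have hlt : ∑ i ∈ univ.erase p.1, 2 * t <
      ∑ i ∈ univ.erase p.1, #(classNeighbors (G.comap (skip c)) p i) := by
    refine sum_lt_sum (fun i hi => ?_) ⟨j, mem_erase.2 ⟨hj, mem_univ _⟩, ?_⟩
    · exact le_card_classNeighbors_comap_skip c G hdeg p i (ne_of_mem_erase hi)
    · rw [card_classNeighbors_comap_skip_of_not_adj c G hnadj]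
      exact hdeg (skip c p) j hj
  have hle : ∑ i ∈ univ.erase p.1, #(classNeighbors (G.comap (skip c)) p i) ≤ 4 * t := by
    rw [← hreg.degree_eq p, degree_eq_sum_card_classNeighbors]
    exact sum_le_sum_of_subset (erase_subset _ _)
  rw [sum_const, card_erase_of_mem (mem_univ _), card_univ, Fintype.card_fin, smul_eq_mul] at hlt
  omega

theorem adj_transversal_of_isRegularOfDegree (hc : ∀ i j, i ≠ j → G.Adj (i, c i) (j, c j))
    (hdeg : ∀ v i, i ≠ v.1 → 2 * t + 1 ≤ #(classNeighbors G v i))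
    (hreg : (G.comap (skip c)).IsRegularOfDegree (4 * t)) (j : Fin 3)
    {w : Fin 3 × Fin (n + 1)} (hw : w.1 ≠ j) : G.Adj (j, c j) w := by
  by_cases hw₂ : w.2 = c w.1
  · obtain ⟨i, x⟩ := w
    obtain rfl : x = c i := hw₂
    exact hc j i hw.symm
  · obtain ⟨p, rfl⟩ := exists_skip_eq c hw₂
    exact (adj_skip_of_isRegularOfDegree hdeg hreg p hw.symm).symm

end Regular

/-- If the tripartite Corrádi–Hajnal theorem holds for all multiples of 3 beyond
`N0`, then for `N = 3t + 1` with `3t ≥ N0`, every balanced tripartite graph on `3N`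
vertices with minimum degree `⌈(2/3)N⌉ = 2t + 1` into each other class has a
perfect triangle tiling. -/
theorem stmt_16 (N0 : ℕ)
    (H : ∀ N : ℕ, 3 ∣ N → N ≥ N0 → ∀ (G : SimpleGraph (Fin 3 × Fin N)),
      ∀ [DecidableRel G.Adj],
      (∀ u v : Fin 3 × Fin N, G.Adj u v → u.1 ≠ v.1) →
      (∀ v : Fin 3 × Fin N, ∀ i, i ≠ v.1 →
        3 * (Finset.univ.filter fun w : Fin 3 × Fin N => w.1 = i ∧ G.Adj v w).card
          ≥ 2 * N) →
      TriTiling G ∨ ∃ t : ℕ, N = 3 * t ∧ Odd t ∧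
        Nonempty (G ≃g blowup (gammaGraph 3) t)) :
    ∀ t : ℕ, 3 * t ≥ N0 → ∀ (G : SimpleGraph (Fin 3 × Fin (3 * t + 1))),
      ∀ [DecidableRel G.Adj],
      (∀ u v : Fin 3 × Fin (3 * t + 1), G.Adj u v → u.1 ≠ v.1) →
      (∀ v : Fin 3 × Fin (3 * t + 1), ∀ i, i ≠ v.1 →
        (Finset.univ.filter fun w : Fin 3 × Fin (3 * t + 1) =>
          w.1 = i ∧ G.Adj v w).card ≥ 2 * t + 1) →
      TriTiling G := by
  intro t ht G _ hpart hdeg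
  have hdeg' : ∀ v i, i ≠ v.1 → 2 * t + 1 ≤ #(classNeighbors G v i) := hdeg
  have tiling_or_regular (c : Fin 3 → Fin (3 * t + 1)) : TriTiling (G.comap (skip c)) ∨
      0 < t ∧ (G.comap (skip c)).IsRegularOfDegree (4 * t) := by
    have hdeg₃ (v : Fin 3 × Fin (3 * t)) (i : Fin 3) (hi : i ≠ v.1) :
        3 * #(classNeighbors (G.comap (skip c)) v i) ≥ 2 * (3 * t) := by
      have := le_card_classNeighbors_comap_skip c G hdeg' v i hi
      omega
    rcases H (3 * t) (dvd_mul_right 3 t) ht (G.comap (skip c)) (fun _ _ h => hpart _ _ h) hdeg₃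
      with h | ⟨s, hs, hodd, ⟨φ⟩⟩
    · exact .inl h
    · obtain rfl : s = t := by omega
      exact .inr ⟨hodd.pos, (isRegularOfDegree_gammaGraph_three.blowup s).of_iso φ⟩
  obtain ⟨c, hc⟩ := exists_triangle_transversal G (by omega) fun v i hi => by
    have := hdeg' v i hi; omega
  rcases tiling_or_regular c with h | ⟨ht₀, hreg⟩
  · exact h.of_comap_skip hc
  obtain ⟨c', hc'⟩ := exists_triangle_transversal (G.comap (skip c)) (by omega) fun v i hi => by
    have := le_card_classNeighbors_comap_skip c G hdeg' v i hi; omega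
  set c₂ : Fin 3 → Fin (3 * t + 1) := fun i => (c i).succAbove (c' i)
  rcases tiling_or_regular c₂ with h | ⟨-, hreg₂⟩
  · exact h.of_comap_skip hc'
  obtain ⟨p, hp⟩ := exists_le_degree_comap_skip c₂ G (j := 1) (Fin.succAbove_ne _ _).symm
    fun _ => adj_transversal_of_isRegularOfDegree hc hdeg' hreg 1
  rw [hreg₂.degree_eq, Fintype.card_fin] at hp
  omega
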